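/- Let (V,q) be a finite weighted graph satisfying CD(0,∞), and let (u_t) solve ∂_t u_t = Δu_t + Γu_t with Γu_0 ≤ q_min/2 pointwise. Then for all t ≥ 0: if α ≥ 1.60 then P_t e^{αu_0} ≥ e^{αu_t} pointwise, and if 0 < α ≤ 0.76 then P_t e^{αu_0} ≤ e^{αu_t} pointwise, where P_t = e^{tΔ} is the heat semigroup. -/

import Mathlib

open Finset Real

/-- Graph Laplacian on a finite weighted graph. -/
noncomputable def glap {V : Type*} [Fintype V] (q : V → V → ℝ) (f : V → ℝ) (x : V) : ℝ :=
  ∑ y, q x y * (f y - f x)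

/-- Carré du champ operator Γ(f,g). -/
noncomputable def gGammaBil {V : Type*} [Fintype V] (q : V → V → ℝ) (f g : V → ℝ) (x : V) : ℝ :=
  (1 / 2) * ∑ y, q x y * (f y - f x) * (g y - g x)

/-- Carré du champ Γf = Γ(f,f). -/
noncomputable def gGamma {V : Type*} [Fintype V] (q : V → V → ℝ) (f : V → ℝ) (x : V) : ℝ :=
  gGammaBil q f f x

/-- Iterated carré du champ Γ₂f = (ΔΓf − 2Γ(f,Δf))/2. -/
noncomputable def gGammaTwo {V : Type*} [Fintype V] (q : V → V → ℝ) (f : V → ℝ) (x : V) : ℝ :=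
  (glap q (gGamma q f) x - 2 * gGammaBil q f (glap q f) x) / 2


open Set Filter Topology


lemma exp_16_lt : Real.exp 1.6 < 5 := by
  have h1 : Real.exp 1.6 ^ (5:ℕ) = Real.exp 1 ^ (8:ℕ) := by
    rw [← Real.exp_nat_mul, ← Real.exp_nat_mul]; norm_num
  have h2 : Real.exp 1 ^ (8:ℕ) < 2.7182818286 ^ (8:ℕ) := by
    exact pow_lt_pow_left₀ Real.exp_one_lt_d9 (Real.exp_pos 1).le (by norm_num)
  have h3 : (2.7182818286:ℝ) ^ (8:ℕ) < 5 ^ (5:ℕ) := by norm_num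
  have : Real.exp 1.6 ^ (5:ℕ) < 5 ^ (5:ℕ) := by rw [h1]; exact h2.trans h3
  exact lt_of_pow_lt_pow_left₀ 5 (by norm_num) this

lemma exp_076_lt : Real.exp 0.76 < 2.14 := by
  have h1 : Real.exp 0.76 ^ (25:ℕ) = Real.exp 1 ^ (19:ℕ) := by
    rw [← Real.exp_nat_mul, ← Real.exp_nat_mul]; norm_num
  have h2 : Real.exp 1 ^ (19:ℕ) < 2.7182818286 ^ (19:ℕ) := by
    exact pow_lt_pow_left₀ Real.exp_one_lt_d9 (Real.exp_pos 1).le (by norm_num)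
  have h3 : (2.7182818286:ℝ) ^ (19:ℕ) < 2.14 ^ (25:ℕ) := by norm_num
  have : Real.exp 0.76 ^ (25:ℕ) < 2.14 ^ (25:ℕ) := by rw [h1]; exact h2.trans h3
  exact lt_of_pow_lt_pow_left₀ 25 (by norm_num) this

lemma exp_quad_upper {x : ℝ} (hx : x ≤ 0) : Real.exp x ≤ 1 + x + x^2/2 := by
  have h1 : 1 + (-x) + (-x)^2/2 ≤ Real.exp (-x) := Real.quadratic_le_exp_of_nonneg (by linarith)
  have hp : (0:ℝ) < 1 - x + x^2/2 := by nlinarith [sq_nonneg x]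
  have h2 : Real.exp x * Real.exp (-x) = 1 := by rw [← Real.exp_add]; simp
  nlinarith [Real.exp_pos x, sq_nonneg x, sq_nonneg (x^2)]


/-- Convexity of `c ↦ exp (α c) - 1 - c`: middle value is at most max of endpoints. -/
lemma exp_lin_le_max (α c₁ c₂ c₃ : ℝ) (h1 : c₁ ≤ c₂) (h2 : c₂ ≤ c₃) :
    Real.exp (α*c₂) - 1 - c₂ ≤
      max (Real.exp (α*c₁) - 1 - c₁) (Real.exp (α*c₃) - 1 - c₃) := by
  rcases eq_or_lt_of_le (h1.trans h2) with heq | hlt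
  · have : c₂ = c₁ := le_antisymm (heq ▸ h2) h1
    subst this; subst heq; exact le_max_left _ _
  · set μ := (c₃ - c₂)/(c₃ - c₁) with hμdef
    set ν := (c₂ - c₁)/(c₃ - c₁) with hνdef
    have hd : (0:ℝ) < c₃ - c₁ := by linarith
    have hμ : 0 ≤ μ := div_nonneg (by linarith) hd.le
    have hν : 0 ≤ ν := div_nonneg (by linarith) hd.le
    have hsum : μ + ν = 1 := by simp only [hμdef, hνdef]; field_simp; ring
    have hcomb : μ • (α*c₁) + ν • (α*c₃) = α*c₂ := by
      simp only [smul_eq_mul, hμdef, hνdef]; field_simp; ring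
    have hc : μ * c₁ + ν * c₃ = c₂ := by
      simp only [hμdef, hνdef]; field_simp; ring
    have hcvx := convexOn_exp.2 (Set.mem_univ (α*c₁)) (Set.mem_univ (α*c₃)) hμ hν hsum
    rw [hcomb] at hcvx
    simp only [smul_eq_mul] at hcvx
    have hm1 : Real.exp (α*c₁) - 1 - c₁ ≤ max (Real.exp (α*c₁) - 1 - c₁) (Real.exp (α*c₃) - 1 - c₃) :=
      le_max_left _ _
    have hm2 : Real.exp (α*c₃) - 1 - c₃ ≤ max (Real.exp (α*c₁) - 1 - c₁) (Real.exp (α*c₃) - 1 - c₃) :=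
      le_max_right _ _
    have hMM : μ * max (Real.exp (α*c₁) - 1 - c₁) (Real.exp (α*c₃) - 1 - c₃)
        + ν * max (Real.exp (α*c₁) - 1 - c₁) (Real.exp (α*c₃) - 1 - c₃)
        = max (Real.exp (α*c₁) - 1 - c₁) (Real.exp (α*c₃) - 1 - c₃) := by
      rw [← add_mul, hsum, one_mul]
    nlinarith [mul_le_mul_of_nonneg_left hm1 hμ, mul_le_mul_of_nonneg_left hm2 hν, hMM, hcvx, hc, hsum]

/-- If `F` is nonnegative at the endpoints and `F'` never goes strictly negative
then strictly positive, then `F` is nonnegative on `[a,b]`. -/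
lemma nonneg_of_deriv_pattern (F F' : ℝ → ℝ) (a b : ℝ) (hab : a < b)
    (hc : ContinuousOn F (Set.Icc a b))
    (hd : ∀ c ∈ Set.Ioo a b, HasDerivAt F (F' c) c)
    (hFa : 0 ≤ F a) (hFb : 0 ≤ F b)
    (hpat : ∀ c₁ ∈ Set.Ioo a b, ∀ c₂ ∈ Set.Ioo a b, c₁ ≤ c₂ →
      F' c₁ < 0 → 0 < F' c₂ → False) :
    ∀ s ∈ Set.Icc a b, 0 ≤ F s := by
  intro s hs
  by_contra hneg
  push_neg at hneg
  have hsa : a < s := lt_of_le_of_ne hs.1 (by rintro rfl; linarith)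
  have hsb : s < b := lt_of_le_of_ne hs.2 (by rintro rfl; linarith)
  obtain ⟨c₁, hc₁, hc₁'⟩ := exists_hasDerivAt_eq_slope F F' hsa
    (hc.mono (Set.Icc_subset_Icc le_rfl hs.2))
    (fun x hx => hd x ⟨hx.1, hx.2.trans hsb⟩)
  obtain ⟨c₂, hc₂, hc₂'⟩ := exists_hasDerivAt_eq_slope F F' hsb
    (hc.mono (Set.Icc_subset_Icc hs.1 le_rfl))
    (fun x hx => hd x ⟨hsa.trans hx.1, hx.2⟩)
  have h1 : F' c₁ < 0 := by
    rw [hc₁']; apply div_neg_of_neg_of_pos <;> linarith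
  have h2 : 0 < F' c₂ := by
    rw [hc₂']; apply div_pos <;> linarith
  exact hpat c₁ ⟨hc₁.1, hc₁.2.trans hsb⟩ c₂ ⟨hsa.trans hc₂.1, hc₂.2⟩
    (le_of_lt (hc₁.2.trans hc₂.1)) h1 h2

lemma ineq_I1 {α s : ℝ} (hα : 1.6 ≤ α) (hs1 : -1 ≤ s) (hs2 : s ≤ 1) :
    α*s + α/2*s^2 ≤ Real.exp (α*s) - 1 := by
  rcases le_or_gt 0 s with hs | hs
  · have h := Real.quadratic_le_exp_of_nonneg (x := α*s) (mul_nonneg (by linarith) hs)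
    nlinarith [sq_nonneg s, sq_nonneg (α*s)]
  · -- s ∈ [-1, 0)
    have key : ∀ w ∈ Set.Icc (-1:ℝ) 0,
        0 ≤ Real.exp (α*w) - 1 - α*w - α/2*w^2 := by
      apply nonneg_of_deriv_pattern _ (fun c => α * Real.exp (α*c) - α - α*c)
        (-1) 0 (by norm_num)
      · fun_prop
      · intro c _
        have h1 : HasDerivAt (fun w : ℝ => α * w) α c := by
          simpa using (hasDerivAt_id c).const_mul α
        have h2 : HasDerivAt (fun w : ℝ => Real.exp (α*w)) (Real.exp (α*c) * α) c := h1.exp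
        have h3 : HasDerivAt (fun w : ℝ => α/2*w^2) (α/2*(2*c)) c := by
          simpa using ((hasDerivAt_pow 2 c).const_mul (α/2))
        have := ((h2.sub_const 1).sub h1).sub h3
        exact this.congr_deriv (by beta_reduce; ring)
      · -- F(-1) = exp(-α) - 1 + α - α/2 ≥ 0
        have hexppos := Real.exp_pos (α*(-1))
        rcases le_or_gt 2 α with h2 | h2
        · nlinarith
        · -- 1.6 ≤ α < 2
          have e1 : Real.exp (α*(-1)) = Real.exp (-1.6) * Real.exp (1.6 - α) := by
            rw [← Real.exp_add]; ring_nf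
          have e2 : (2.6:ℝ) - α ≤ Real.exp (1.6 - α) := by
            have := Real.add_one_le_exp (1.6 - α); linarith
          have e3 : (1:ℝ)/5 < Real.exp (-1.6) := by
            have h5 : Real.exp (-1.6) * Real.exp 1.6 = 1 := by
              rw [← Real.exp_add]; norm_num
            nlinarith [Real.exp_pos 1.6, exp_16_lt]
          have e4 : Real.exp (-1.6) * (2.6 - α) ≤ Real.exp (α*(-1)) := by
            rw [e1]
            exact mul_le_mul_of_nonneg_left e2 (Real.exp_pos _).le
          nlinarith [Real.exp_pos (-1.6)]
      · simp
      · intro c₁ hc₁ c₂ hc₂ h12 hd1 hd2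
        have hα0 : (0:ℝ) < α := by linarith
        have hψ1 : Real.exp (α*c₁) - 1 - c₁ < 0 := by nlinarith
        have hψ2 : 0 < Real.exp (α*c₂) - 1 - c₂ := by nlinarith
        have := exp_lin_le_max α c₁ c₂ 0 h12 hc₂.2.le
        simp only [mul_zero, Real.exp_zero] at this
        have hmax : max (Real.exp (α*c₁) - 1 - c₁) ((1:ℝ) - 1 - 0) < Real.exp (α*c₂) - 1 - c₂ :=
          max_lt (by linarith) (by norm_num; linarith)
        exact absurd this (not_le.2 hmax)
    have := key s ⟨hs1, hs.le⟩
    linarith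

lemma ineq_I2 {α s : ℝ} (hα0 : 0 < α) (hα : α ≤ 0.76) (hs1 : -1 ≤ s) (hs2 : s ≤ 1) :
    Real.exp (α*s) - 1 ≤ α*s + α/2*s^2 := by
  rcases le_or_gt s 0 with hs | hs
  · have hx : α*s ≤ 0 := mul_nonpos_of_nonneg_of_nonpos hα0.le hs
    have h := exp_quad_upper hx
    nlinarith [sq_nonneg s]
  · -- s ∈ (0, 1]
    have key : ∀ w ∈ Set.Icc (0:ℝ) 1,
        0 ≤ α*w + α/2*w^2 + 1 - Real.exp (α*w) := by
      apply nonneg_of_deriv_pattern _ (fun c => α + α*c - α * Real.exp (α*c))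
        0 1 (by norm_num)
      · fun_prop
      · intro c _
        have h1 : HasDerivAt (fun w : ℝ => α * w) α c := by
          simpa using (hasDerivAt_id c).const_mul α
        have h2 : HasDerivAt (fun w : ℝ => Real.exp (α*w)) (Real.exp (α*c) * α) c := h1.exp
        have h3 : HasDerivAt (fun w : ℝ => α/2*w^2) (α/2*(2*c)) c := by
          simpa using ((hasDerivAt_pow 2 c).const_mul (α/2))
        have := ((h1.add h3).add_const 1).sub h2
        exact this.congr_deriv (by beta_reduce; ring)
      · simp
      · -- F(1) = α + α/2 + 1 - exp α ≥ 0  using chord of exp on [0, 0.76]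
        have hchord : Real.exp α ≤ 1 + 1.5*α := by
          set μ := ((0.76:ℝ) - α)/0.76 with hμdef
          set ν := α/0.76 with hνdef
          have hμ : 0 ≤ μ := by rw [hμdef]; exact div_nonneg (by linarith) (by norm_num)
          have hν : 0 ≤ ν := by rw [hνdef]; exact div_nonneg hα0.le (by norm_num)
          have hsum : μ + ν = 1 := by rw [hμdef, hνdef]; ring_nf
          have hcomb : μ • (0:ℝ) + ν • (0.76:ℝ) = α := by
            simp only [smul_eq_mul, hμdef, hνdef]; ring_nf
          have hcvx := convexOn_exp.2 (Set.mem_univ (0:ℝ)) (Set.mem_univ (0.76:ℝ)) hμ hν hsum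
          rw [hcomb] at hcvx
          simp only [smul_eq_mul, Real.exp_zero] at hcvx
          have h214 : ν * Real.exp 0.76 ≤ ν * 2.14 :=
            mul_le_mul_of_nonneg_left exp_076_lt.le hν
          have hfin : μ * 1 + ν * 2.14 = 1 + 1.5*α := by
            rw [hμdef, hνdef]; ring_nf
          linarith
        simp only [mul_one, one_pow]
        nlinarith
      · intro c₁ hc₁ c₂ hc₂ h12 hd1 hd2
        have hψ1 : 0 < Real.exp (α*c₁) - 1 - c₁ := by nlinarith
        have hψ2 : Real.exp (α*c₂) - 1 - c₂ < 0 := by nlinarith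
        have := exp_lin_le_max α 0 c₁ c₂ hc₁.1.le h12
        simp only [mul_zero, Real.exp_zero] at this
        have hmax : max ((1:ℝ) - 1 - 0) (Real.exp (α*c₂) - 1 - c₂) < Real.exp (α*c₁) - 1 - c₁ :=
          max_lt (by norm_num; linarith) (by linarith)
        exact absurd this (not_le.2 hmax)
    have := key s ⟨hs.le, hs2⟩
    linarith


/-- Parabolic-type maximum principle for finitely many coupled ODEs with a barrier. -/
theorem finmax_MP {V : Type*} [Fintype V] [Nonempty V]
    (g g' : ℝ → V → ℝ) (B B' : ℝ → ℝ) (a b : ℝ)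
    (hg : ∀ t ∈ Set.Icc a b, ∀ x, HasDerivWithinAt (fun s => g s x) (g' t x) (Set.Ici a) t)
    (hB : ∀ t ∈ Set.Icc a b, HasDerivWithinAt B (B' t) (Set.Ici a) t)
    (ha : ∀ x, g a x ≤ B a)
    (key : ∀ t ∈ Set.Ico a b, ∀ x, (∀ y, g t y ≤ B t) → g t x = B t → g' t x < B' t) :
    ∀ t ∈ Set.Icc a b, ∀ x, g t x ≤ B t := by
  classical
  rcases le_or_gt b a with hba | hab
  · intro t ht x
    have : t = a := le_antisymm (ht.2.trans hba) ht.1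
    subst this; exact ha x
  set f : ℝ → ℝ := fun t => Finset.univ.sup' Finset.univ_nonempty (g t) with hf
  have hgle : ∀ t x, g t x ≤ f t := fun t x => Finset.le_sup' (g t) (Finset.mem_univ x)
  have hAne : ∀ t, (Finset.univ.filter (fun x => g t x = f t)).Nonempty := by
    intro t
    obtain ⟨x, -, hx⟩ := Finset.exists_mem_eq_sup' Finset.univ_nonempty (g t)
    exact ⟨x, Finset.mem_filter.2 ⟨Finset.mem_univ x, hx.symm⟩⟩
  set F' : ℝ → ℝ := fun t => (Finset.univ.filter (fun x => g t x = f t)).sup' (hAne t) (g' t)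
    with hF'
  have hcont : ∀ x, ContinuousOn (fun t => g t x) (Set.Icc a b) := by
    intro x t ht
    exact ((hg t ht x).continuousWithinAt).mono Set.Icc_subset_Ici_self
  have hfc : ContinuousOn f (Set.Icc a b) :=
    ContinuousOn.finset_sup'_apply Finset.univ_nonempty (fun i _ => hcont i)
  have main : ∀ ⦃t⦄, t ∈ Set.Icc a b → f t ≤ B t := by
    apply image_le_of_liminf_slope_right_lt_deriv_boundary' (f' := F') hfc
    · -- slope condition
      intro t ht r hr
      have hta : a ≤ t := ht.1
      have ex : ∀ x : V, ∀ᶠ z in 𝓝[>] t, g z x < f t + r * (z - t) := by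
        intro x
        by_cases hx : g t x = f t
        · have hmem : x ∈ Finset.univ.filter (fun y => g t y = f t) :=
            Finset.mem_filter.2 ⟨Finset.mem_univ x, hx⟩
          have hle : g' t x ≤ F' t := Finset.le_sup' (g' t) hmem
          have hd : HasDerivWithinAt (fun s => g s x) (g' t x) (Set.Ici t) t :=
            (hg t (Set.Ico_subset_Icc_self ht) x).mono (Set.Ici_subset_Ici.2 hta)
          have hslope := hasDerivWithinAt_iff_tendsto_slope.1 hd
          rw [Set.Ici_sdiff_left] at hslope
          have hev : ∀ᶠ z in 𝓝[>] t, slope (fun s => g s x) t z < r :=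
            hslope.eventually (gt_mem_nhds (lt_of_le_of_lt hle hr))
          filter_upwards [hev, self_mem_nhdsWithin] with z h1 h2
          rw [slope_def_field] at h1
          have hz : 0 < z - t := sub_pos.2 h2
          have := (div_lt_iff₀ hz).1 h1
          linarith [hx ▸ this]
        · have hlt : g t x < f t := lt_of_le_of_ne (hgle t x) hx
          set d := f t - g t x with hd
          have hd0 : 0 < d := by simp [hd]; linarith
          have hct : Tendsto (fun z => g z x) (𝓝[>] t) (𝓝 (g t x)) := by
            have := ((hg t (Set.Ico_subset_Icc_self ht) x).continuousWithinAt)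
            exact this.mono_left (nhdsWithin_mono t (fun z hz => le_of_lt (lt_of_le_of_lt hta hz)))
          have ev1 : ∀ᶠ z in 𝓝[>] t, g z x < g t x + d/2 :=
            hct.eventually (gt_mem_nhds (by linarith))
          have htend : Tendsto (fun z => r * (z - t)) (𝓝[>] t) (𝓝 0) := by
            have : Tendsto (fun z : ℝ => r * (z - t)) (𝓝 t) (𝓝 (r * (t - t))) :=
              (continuous_const.mul (continuous_id.sub continuous_const)).tendsto t
            simpa using this.mono_left nhdsWithin_le_nhds
          have ev2 : ∀ᶠ z in 𝓝[>] t, -(d/2) < r * (z - t) :=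
            htend.eventually (lt_mem_nhds (by linarith))
          filter_upwards [ev1, ev2] with z h1 h2
          have : g t x + d/2 = f t - d/2 := by simp [hd]; ring
          linarith
      have hall := Filter.eventually_all.2 ex
      apply Filter.Eventually.frequently
      filter_upwards [hall, self_mem_nhdsWithin] with z hz hzt
      have hz0 : 0 < z - t := sub_pos.2 hzt
      have hfz : f z < f t + r * (z - t) := by
        rw [hf]
        exact (Finset.sup'_lt_iff _).2 (fun x _ => hz x)
      rw [slope_def_field, div_lt_iff₀ hz0]
      linarith
    · exact Finset.sup'_le _ _ (fun x _ => ha x)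
    · intro t ht
      exact ((hB t ht).continuousWithinAt).mono Set.Icc_subset_Ici_self
    · intro t ht
      exact (hB t (Set.Ico_subset_Icc_self ht)).mono (Set.Ici_subset_Ici.2 ht.1)
    · intro t ht htB
      rw [hF']
      apply (Finset.sup'_lt_iff _).2
      intro x hx
      rw [Finset.mem_filter] at hx
      exact key t ht x (fun y => (hgle t y).trans_eq htB) (hx.2.trans htB)
  intro t ht x
  exact (hgle t x).trans (main ht)

section Graph
variable {V : Type*} [Fintype V] (q : V → V → ℝ)

lemma gGamma_nonneg (hq : ∀ x y, 0 ≤ q x y) (f : V → ℝ) (x : V) : 0 ≤ gGamma q f x := by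
  unfold gGamma gGammaBil
  apply mul_nonneg (by norm_num)
  exact Finset.sum_nonneg fun y _ => by
    have h := hq x y; nlinarith [sq_nonneg (f y - f x)]

lemma single_le_gGamma (hq : ∀ x y, 0 ≤ q x y) (f : V → ℝ) (x y : V) :
    q x y * (f y - f x)^2 ≤ 2 * gGamma q f x := by
  unfold gGamma gGammaBil
  rw [show (2:ℝ) * ((1/2) * ∑ z, q x z * (f z - f x) * (f z - f x))
      = ∑ z, q x z * (f z - f x) * (f z - f x) by ring]
  have := Finset.single_le_sum (f := fun z => q x z * (f z - f x) * (f z - f x))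
    (fun z _ => by have h := hq x z; nlinarith [sq_nonneg (f z - f x)])
    (Finset.mem_univ y)
  nlinarith [this]

lemma hasDeriv_gGamma (u : ℝ → V → ℝ) (du : V → ℝ) (t : ℝ) (S : Set ℝ)
    (hu : ∀ z, HasDerivWithinAt (fun s => u s z) (du z) S t) (x : V) :
    HasDerivWithinAt (fun s => gGamma q (u s) x)
      (2 * gGammaBil q (u t) du x) S t := by
  have h : ∀ y : V, HasDerivWithinAt
      (fun s => q x y * (u s y - u s x) * (u s y - u s x))
      (q x y * ((du y - du x) * (u t y - u t x) + (u t y - u t x) * (du y - du x))) S t := by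
    intro y
    have h1 : HasDerivWithinAt (fun s => u s y - u s x) (du y - du x) S t := (hu y).sub (hu x)
    have := (h1.mul h1).const_mul (q x y)
    exact this.congr (fun s _ => by simp only [Pi.mul_apply]; ring) (by simp only [Pi.mul_apply]; ring)
  have hsum := HasDerivWithinAt.fun_sum (fun y (_ : y ∈ Finset.univ) => h y)
  have := hsum.const_mul ((1:ℝ)/2)
  refine this.congr_deriv ?_
  simp only [gGammaBil, Finset.mul_sum]
  exact Finset.sum_congr rfl fun y _ => by ring

end Graph

section Graph2
variable {V : Type*} [Fintype V] (q : V → V → ℝ)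

lemma gGammaBil_add_right (f g h : V → ℝ) (x : V) :
    gGammaBil q f (fun y => g y + h y) x = gGammaBil q f g x + gGammaBil q f h x := by
  simp only [gGammaBil, Finset.mul_sum, ← Finset.sum_add_distrib]
  exact Finset.sum_congr rfl fun y _ => by ring

lemma phaseA_key (hq : ∀ x y, 0 ≤ q x y) (qmin : ℝ) (hqmin_pos : 0 < qmin)
    (hqmin : ∀ x y, 0 < q x y → qmin ≤ q x y)
    (hCD : ∀ f : V → ℝ, ∀ x, 0 ≤ gGammaTwo q f x)
    (f : V → ℝ) (x : V) (M : ℝ) (hM : qmin/2 ≤ M)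
    (hMle : ∀ y, gGamma q f y ≤ M) (hMx : gGamma q f x = M) :
    2 * gGammaBil q f (fun y => glap q f y + gGamma q f y) x
      ≤ (M - qmin/2)/qmin * ((∑ y, q x y) * M) := by
  set c := (M - qmin/2)/qmin with hc
  have hc0 : 0 ≤ c := div_nonneg (by linarith) hqmin_pos.le
  have hcq : qmin * c = M - qmin/2 := by rw [hc]; field_simp
  have hM0 : 0 ≤ M := by linarith
  have h1 : 2 * gGammaBil q f (fun y => glap q f y + gGamma q f y) x
      = glap q (gGamma q f) x - 2 * gGammaTwo q f x + 2 * gGammaBil q f (gGamma q f) x := by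
    rw [gGammaBil_add_right]; unfold gGammaTwo; ring
  have h3 : glap q (gGamma q f) x + 2 * gGammaBil q f (gGamma q f) x
      = ∑ y, q x y * ((gGamma q f y - gGamma q f x) * (1 + (f y - f x))) := by
    simp only [glap, gGammaBil, Finset.mul_sum, ← Finset.sum_add_distrib]
    exact Finset.sum_congr rfl fun y _ => by ring
  have h4 : ∀ y, q x y * ((gGamma q f y - gGamma q f x) * (1 + (f y - f x)))
      ≤ q x y * (c * M) := by
    intro y
    rcases (hq x y).eq_or_lt with h0 | hpos
    · rw [← h0]; simp
    · have hqm := hqmin x y hpos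
      have hgy0 : 0 ≤ gGamma q f y := gGamma_nonneg q hq f y
      have hgyM : gGamma q f y ≤ M := hMle y
      have hsq : q x y * (f y - f x)^2 ≤ 2*M := by
        have h := single_le_gGamma q hq f x y; rw [hMx] at h; linarith
      have hs2 : (f y - f x)^2 ≤ 1 + 2*c := by
        have h5 : qmin * (f y - f x)^2 ≤ q x y * (f y - f x)^2 :=
          mul_le_mul_of_nonneg_right hqm (sq_nonneg _)
        nlinarith
      have habs : -(1+c) ≤ f y - f x := by
        nlinarith [hs2, sq_nonneg c]
      have hD : 0 ≤ gGamma q f x - gGamma q f y := by rw [hMx]; linarith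
      have key : (gGamma q f y - gGamma q f x) * (1 + (f y - f x))
          ≤ c * (gGamma q f x - gGamma q f y) := by
        nlinarith [mul_nonneg hD (show (0:ℝ) ≤ 1 + (f y - f x) + c by linarith)]
      have h6 : c * (gGamma q f x - gGamma q f y) ≤ c * M := by
        apply mul_le_mul_of_nonneg_left _ hc0; rw [hMx]; linarith
      have h7 := mul_le_mul_of_nonneg_left (key.trans h6) (hq x y)
      linarith [h7]
  rw [h1]
  have h2 := hCD f x
  calc glap q (gGamma q f) x - 2 * gGammaTwo q f x + 2 * gGammaBil q f (gGamma q f) x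
      ≤ glap q (gGamma q f) x + 2 * gGammaBil q f (gGamma q f) x := by linarith
    _ = ∑ y, q x y * ((gGamma q f y - gGamma q f x) * (1 + (f y - f x))) := h3
    _ ≤ ∑ y, q x y * (c * M) := Finset.sum_le_sum fun y _ => h4 y
    _ = (∑ y, q x y) * (c * M) := (Finset.sum_mul _ _ _).symm
    _ = (M - qmin/2)/qmin * ((∑ y, q x y) * M) := by rw [← hc]; ring
end Graph2

section Graph3
variable {V : Type*} [Fintype V] (q : V → V → ℝ)

lemma glap_gGamma_sum (f : V → ℝ) (x : V) :
    glap q f x + gGamma q f x = ∑ y, q x y * ((f y - f x) + (1/2)*(f y - f x)^2) := by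
  simp only [glap, gGamma, gGammaBil, Finset.mul_sum, ← Finset.sum_add_distrib]
  exact Finset.sum_congr rfl fun y _ => by ring

lemma sq_le_one_of_nbr (hq : ∀ x y, 0 ≤ q x y) (qmin : ℝ)
    (hqmin : ∀ x y, 0 < q x y → qmin ≤ q x y) (f : V → ℝ) (x : V)
    (hgx : gGamma q f x ≤ qmin/2) {y : V} (hpos : 0 < q x y) :
    (f y - f x)^2 ≤ 1 := by
  have h := single_le_gGamma q hq f x y
  have hqm := hqmin x y hpos
  nlinarith

lemma phaseC_upper_key (hq : ∀ x y, 0 ≤ q x y) (qmin : ℝ)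
    (hqmin : ∀ x y, 0 < q x y → qmin ≤ q x y)
    (α : ℝ) (hα : 1.6 ≤ α) (f w : V → ℝ) (x : V)
    (hgx : gGamma q f x ≤ qmin/2)
    (hmax : ∀ y, Real.exp (α * f y) - w y ≤ Real.exp (α * f x) - w x) :
    Real.exp (α * f x) * (α * (glap q f x + gGamma q f x)) - glap q w x ≤ 0 := by
  set E := Real.exp (α * f x) with hE
  have hE0 : 0 < E := Real.exp_pos _
  have h1 : E * (α * (glap q f x + gGamma q f x))
      = ∑ y, q x y * (E * (α*(f y - f x) + α/2*(f y - f x)^2)) := by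
    rw [glap_gGamma_sum, Finset.mul_sum, Finset.mul_sum]
    exact Finset.sum_congr rfl fun y _ => by ring
  rw [h1, glap, ← Finset.sum_sub_distrib]
  apply Finset.sum_nonpos
  intro y _
  rcases (hq x y).eq_or_lt with h0 | hpos
  · rw [← h0]; simp
  · have hsq := sq_le_one_of_nbr q hq qmin hqmin f x hgx hpos
    have hs1 : -1 ≤ f y - f x := by nlinarith
    have hs2 : f y - f x ≤ 1 := by nlinarith
    have hI := ineq_I1 hα hs1 hs2
    have hexp : E * Real.exp (α*(f y - f x)) = Real.exp (α * f y) := by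
      rw [hE, ← Real.exp_add]; ring_nf
    have hmy := hmax y
    have hprod := mul_le_mul_of_nonneg_left hI (mul_nonneg hpos.le hE0.le)
    nlinarith [hprod, mul_le_mul_of_nonneg_left hmy hpos.le, hexp, hpos.le]

lemma phaseC_lower_key (hq : ∀ x y, 0 ≤ q x y) (qmin : ℝ)
    (hqmin : ∀ x y, 0 < q x y → qmin ≤ q x y)
    (α : ℝ) (hα0 : 0 < α) (hα : α ≤ 0.76) (f w : V → ℝ) (x : V)
    (hgx : gGamma q f x ≤ qmin/2)
    (hmax : ∀ y, w y - Real.exp (α * f y) ≤ w x - Real.exp (α * f x)) :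
    glap q w x - Real.exp (α * f x) * (α * (glap q f x + gGamma q f x)) ≤ 0 := by
  set E := Real.exp (α * f x) with hE
  have hE0 : 0 < E := Real.exp_pos _
  have h1 : E * (α * (glap q f x + gGamma q f x))
      = ∑ y, q x y * (E * (α*(f y - f x) + α/2*(f y - f x)^2)) := by
    rw [glap_gGamma_sum, Finset.mul_sum, Finset.mul_sum]
    exact Finset.sum_congr rfl fun y _ => by ring
  rw [h1, glap, ← Finset.sum_sub_distrib]
  apply Finset.sum_nonpos
  intro y _
  rcases (hq x y).eq_or_lt with h0 | hpos
  · rw [← h0]; simp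
  · have hsq := sq_le_one_of_nbr q hq qmin hqmin f x hgx hpos
    have hs1 : -1 ≤ f y - f x := by nlinarith
    have hs2 : f y - f x ≤ 1 := by nlinarith
    have hI := ineq_I2 hα0 hα hs1 hs2
    have hexp : E * Real.exp (α*(f y - f x)) = Real.exp (α * f y) := by
      rw [hE, ← Real.exp_add]; ring_nf
    have hmy := hmax y
    have hprod := mul_le_mul_of_nonneg_left hI (mul_nonneg hpos.le hE0.le)
    nlinarith [hprod, mul_le_mul_of_nonneg_left hmy hpos.le, hexp, hpos.le]
end Graph3

theorem gradient_bound {V : Type*} [Fintype V] [Nonempty V] (q : V → V → ℝ)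
    (hq : ∀ x y, 0 ≤ q x y) (qmin : ℝ)
    (hqmin_pos : 0 < qmin) (hqmin : ∀ x y, 0 < q x y → qmin ≤ q x y)
    (hCD : ∀ f : V → ℝ, ∀ x, 0 ≤ gGammaTwo q f x)
    (u : ℝ → V → ℝ)
    (hu : ∀ t ∈ Set.Ici (0 : ℝ), ∀ x, HasDerivWithinAt (fun s => u s x)
      (glap q (u t) x + gGamma q (u t) x) (Set.Ici 0) t)
    (h0 : ∀ x, gGamma q (u 0) x ≤ qmin / 2) :
    ∀ t ∈ Set.Ici (0:ℝ), ∀ x, gGamma q (u t) x ≤ qmin/2 := by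
  classical
  set Q := Finset.univ.sup' Finset.univ_nonempty (fun x : V => ∑ y, q x y) with hQdef
  have hQ : ∀ x, (∑ y, q x y) ≤ Q := fun x =>
    Finset.le_sup' (f := fun x : V => ∑ y, q x y) (Finset.mem_univ x)
  have hQ0 : 0 ≤ Q :=
    le_trans (Finset.sum_nonneg fun y _ => hq (Classical.arbitrary V) y) (hQ _)
  set K := Q*(qmin/2+1)/qmin + 1 with hKdef
  have hK1 : 1 ≤ K := by
    have h : 0 ≤ Q*(qmin/2+1)/qmin := div_nonneg (mul_nonneg hQ0 (by linarith)) hqmin_pos.le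
    rw [hKdef]; linarith
  have step : ∀ n : ℕ, (∀ x, gGamma q (u (n:ℝ)) x ≤ qmin/2) →
      ∀ t ∈ Set.Icc (n:ℝ) ((n:ℝ)+1), ∀ x, gGamma q (u t) x ≤ qmin/2 := by
    intro n hn t ht x
    by_contra hcon
    push_neg at hcon
    have hn0 : (0:ℝ) ≤ (n:ℝ) := Nat.cast_nonneg n
    have hC0 : 0 < Real.exp (K*(t - (n:ℝ))) := Real.exp_pos _
    have hεb : ∀ ε, 0 < ε → ε ≤ Real.exp (-K) →
        gGamma q (u t) x ≤ qmin/2 + ε * Real.exp (K*(t-(n:ℝ))) := by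
      intro ε hε hεK
      refine finmax_MP (fun s z => gGamma q (u s) z)
        (fun s z => 2 * gGammaBil q (u s) (fun y => glap q (u s) y + gGamma q (u s) y) z)
        (fun s => qmin/2 + ε * Real.exp (K*(s-(n:ℝ))))
        (fun s => ε * (Real.exp (K*(s-(n:ℝ))) * K))
        (n:ℝ) ((n:ℝ)+1) ?_ ?_ ?_ ?_ t ht x
      · intro s hs z
        exact hasDeriv_gGamma q u _ s (Set.Ici (n:ℝ))
          (fun z' => (hu s (le_trans hn0 hs.1) z').mono (Set.Ici_subset_Ici.2 hn0)) z
      · intro s hs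
        have hd1 : HasDerivAt (fun r : ℝ => K*(r - (n:ℝ))) K s := by
          simpa using ((hasDerivAt_id s).sub_const (n:ℝ)).const_mul K
        exact ((hd1.exp.const_mul ε).const_add (qmin/2)).hasDerivWithinAt
      · intro z
        have h := hn z
        show gGamma q (u (n:ℝ)) z ≤ qmin/2 + ε * Real.exp (K*((n:ℝ)-(n:ℝ)))
        have he : Real.exp (K*((n:ℝ)-(n:ℝ))) = 1 := by simp
        rw [he]
        linarith
      · intro s hs z hall heq
        obtain ⟨M, hM⟩ : ∃ M : ℝ, M = qmin/2 + ε * Real.exp (K*(s-(n:ℝ))) := ⟨_, rfl⟩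
        rw [← hM] at hall heq
        have hexps : 0 < Real.exp (K*(s-(n:ℝ))) := Real.exp_pos _
        have hEpos : 0 < ε * Real.exp (K*(s-(n:ℝ))) := mul_pos hε hexps
        have hMlb : qmin/2 ≤ M := by rw [hM]; linarith
        have hkey := phaseA_key q hq qmin hqmin_pos hqmin hCD (u s) z M hMlb hall heq
        have hsle : Real.exp (K*(s-(n:ℝ))) ≤ Real.exp K := by
          apply Real.exp_le_exp.2
          nlinarith [hs.1, hs.2]
        have hM1 : M ≤ qmin/2 + 1 := by
          have h2 : ε * Real.exp (K*(s-(n:ℝ))) ≤ Real.exp (-K) * Real.exp K :=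
            mul_le_mul hεK hsle hexps.le (Real.exp_pos _).le
          rw [← Real.exp_add] at h2
          simp at h2
          rw [hM]; linarith
        have hMge : qmin/2 ≤ M := hMlb
        have hsum0 : 0 ≤ ∑ y, q z y := Finset.sum_nonneg fun y _ => hq z y
        have hM0 : 0 ≤ M := by linarith
        have hSM : (∑ y, q z y) * M ≤ Q * (qmin/2+1) :=
          mul_le_mul (hQ z) hM1 hM0 hQ0
        have hc0 : 0 ≤ (M - qmin/2)/qmin := div_nonneg (by linarith) hqmin_pos.le
        have hRHS : (M - qmin/2)/qmin * ((∑ y, q z y) * M)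
            ≤ (M - qmin/2) * (Q*(qmin/2+1)/qmin) := by
          have := mul_le_mul_of_nonneg_left hSM hc0
          calc (M - qmin/2)/qmin * ((∑ y, q z y) * M)
              ≤ (M - qmin/2)/qmin * (Q*(qmin/2+1)) := this
            _ = (M - qmin/2) * (Q*(qmin/2+1)/qmin) := by ring
        have hEM : M - qmin/2 = ε * Real.exp (K*(s-(n:ℝ))) := by rw [hM]; ring
        have hfin : (M - qmin/2) * (Q*(qmin/2+1)/qmin) < ε * (Real.exp (K*(s-(n:ℝ))) * K) := by
          rw [hEM]
          have h3 : Q*(qmin/2+1)/qmin < K := by rw [hKdef]; linarith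
          calc ε * Real.exp (K*(s-(n:ℝ))) * (Q*(qmin/2+1)/qmin)
              < ε * Real.exp (K*(s-(n:ℝ))) * K := by
                exact mul_lt_mul_of_pos_left h3 hEpos
            _ = ε * (Real.exp (K*(s-(n:ℝ))) * K) := by ring
        exact (hkey.trans hRHS).trans_lt hfin
    set C := Real.exp (K*(t-(n:ℝ))) with hCdef
    set d := gGamma q (u t) x - qmin/2 with hddef
    have hd0 : 0 < d := by rw [hddef]; linarith
    set ε₀ := min (Real.exp (-K)) (d/(2*C)) with hε₀def
    have hε₀ : 0 < ε₀ := lt_min (Real.exp_pos _) (by positivity)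
    have h1 := hεb ε₀ hε₀ (min_le_left _ _)
    have h2 : ε₀ * C ≤ (d/(2*C))*C :=
      mul_le_mul_of_nonneg_right (min_le_right _ _) hC0.le
    have h3 : (d/(2*C))*C = d/2 := by field_simp
    rw [h3] at h2
    rw [hddef] at hd0
    linarith
  have hnat : ∀ n : ℕ, ∀ x, gGamma q (u (n:ℝ)) x ≤ qmin/2 := by
    intro n
    induction n with
    | zero => simpa using h0
    | succ m ih =>
      intro x
      have h := step m ih ((m:ℝ)+1) ⟨by linarith, le_refl _⟩ x
      have : ((m+1 : ℕ):ℝ) = (m:ℝ)+1 := by push_cast; ring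
      rw [this]
      exact h
  intro t ht x
  exact step ⌊t⌋₊ (hnat ⌊t⌋₊) t ⟨Nat.floor_le ht, (Nat.lt_floor_add_one t).le⟩ x


/-- Semigroup comparison under CD(0,∞): comparison of e^{αu_t} with P_t e^{αu_0}, where
P_t is the heat semigroup, characterized as the (unique) solution of the heat equation. -/
theorem semigroup_comparison_CD_zero_infty {V : Type*} [Fintype V] (q : V → V → ℝ)
    (hq : ∀ x y, 0 ≤ q x y) (hdiag : ∀ x, q x x = 0) (qmin : ℝ)
    (hqmin_pos : 0 < qmin) (hqmin : ∀ x y, 0 < q x y → qmin ≤ q x y)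
    (hCD : ∀ f : V → ℝ, ∀ x, 0 ≤ gGammaTwo q f x)
    (u : ℝ → V → ℝ)
    (hu : ∀ t ∈ Set.Ici (0 : ℝ), ∀ x, HasDerivWithinAt (fun s => u s x)
      (glap q (u t) x + gGamma q (u t) x) (Set.Ici 0) t)
    (h0 : ∀ x, gGamma q (u 0) x ≤ qmin / 2)
    (α : ℝ) (v : ℝ → V → ℝ)
    (hv0 : ∀ x, v 0 x = Real.exp (α * u 0 x))
    (hv : ∀ t ∈ Set.Ici (0 : ℝ), ∀ x, HasDerivWithinAt (fun s => v s x)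
      (glap q (v t) x) (Set.Ici 0) t) :
    ∀ t ∈ Set.Ici (0 : ℝ), ∀ x,
      (1.60 ≤ α → Real.exp (α * u t x) ≤ v t x)
      ∧ (0 < α → α ≤ 0.76 → v t x ≤ Real.exp (α * u t x)) := by
  cases isEmpty_or_nonempty V with
  | inl hemp => intro t ht x; exact isEmptyElim x
  | inr hne =>
  have hgrad := gradient_bound q hq qmin hqmin_pos hqmin hCD u hu h0
  intro t ht x
  have ht0 : (0:ℝ) ≤ t := ht
  constructor
  · -- upper bound
    intro hα160
    have hα : (1.6:ℝ) ≤ α := by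
      have : (1.60:ℝ) = 1.6 := by norm_num
      linarith [this ▸ hα160]
    have hεb : ∀ ε : ℝ, 0 < ε → Real.exp (α * u t x) - v t x ≤ ε * Real.exp t := by
      intro ε hε
      refine finmax_MP (fun s z => Real.exp (α * u s z) - v s z)
        (fun s z => Real.exp (α * u s z) * (α * (glap q (u s) z + gGamma q (u s) z))
          - glap q (v s) z)
        (fun s => ε * Real.exp s) (fun s => ε * Real.exp s)
        0 (t+1) ?_ ?_ ?_ ?_ t ⟨ht0, by linarith⟩ x
      · intro s hs z
        exact (((hu s hs.1 z).const_mul α).exp).sub (hv s hs.1 z)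
      · intro s _
        exact ((Real.hasDerivAt_exp s).const_mul ε).hasDerivWithinAt
      · intro z
        rw [hv0 z, Real.exp_zero]
        simp
        positivity
      · intro s hs z hall heq
        have hgs := hgrad s hs.1 z
        have hmax : ∀ y, Real.exp (α * u s y) - v s y ≤ Real.exp (α * u s z) - v s z :=
          fun y => (hall y).trans heq.ge
        have hkey := phaseC_upper_key q hq qmin hqmin α hα (u s) (v s) z hgs hmax
        have : (0:ℝ) < ε * Real.exp s := by positivity
        linarith
    by_contra hcon
    push_neg at hcon
    have hd : 0 < Real.exp (α * u t x) - v t x := by linarith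
    have h1 := hεb ((Real.exp (α * u t x) - v t x)/(2*Real.exp t)) (by positivity)
    have h2 : ((Real.exp (α * u t x) - v t x)/(2*Real.exp t)) * Real.exp t
        = (Real.exp (α * u t x) - v t x)/2 := by
      field_simp
    rw [h2] at h1
    linarith
  · -- lower bound
    intro hα0 hα76
    have hα : α ≤ (0.76:ℝ) := by
      have : (0.76:ℝ) = 0.76 := rfl
      linarith
    have hεb : ∀ ε : ℝ, 0 < ε → v t x - Real.exp (α * u t x) ≤ ε * Real.exp t := by
      intro ε hε
      refine finmax_MP (fun s z => v s z - Real.exp (α * u s z))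
        (fun s z => glap q (v s) z
          - Real.exp (α * u s z) * (α * (glap q (u s) z + gGamma q (u s) z)))
        (fun s => ε * Real.exp s) (fun s => ε * Real.exp s)
        0 (t+1) ?_ ?_ ?_ ?_ t ⟨ht0, by linarith⟩ x
      · intro s hs z
        exact (hv s hs.1 z).sub (((hu s hs.1 z).const_mul α).exp)
      · intro s _
        exact ((Real.hasDerivAt_exp s).const_mul ε).hasDerivWithinAt
      · intro z
        rw [hv0 z, Real.exp_zero]
        simp
        positivity
      · intro s hs z hall heq
        have hgs := hgrad s hs.1 z
        have hmax : ∀ y, v s y - Real.exp (α * u s y) ≤ v s z - Real.exp (α * u s z) :=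
          fun y => (hall y).trans heq.ge
        have hkey := phaseC_lower_key q hq qmin hqmin α hα0 hα (u s) (v s) z hgs hmax
        have : (0:ℝ) < ε * Real.exp s := by positivity
        linarith
    by_contra hcon
    push_neg at hcon
    have hd : 0 < v t x - Real.exp (α * u t x) := by linarith
    have h1 := hεb ((v t x - Real.exp (α * u t x))/(2*Real.exp t)) (by positivity)
    have h2 : ((v t x - Real.exp (α * u t x))/(2*Real.exp t)) * Real.exp t
        = (v t x - Real.exp (α * u t x))/2 := by
      field_simp
    rw [h2] at h1
    linarith
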